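/- arXiv:2205.01210 — 2 statements merged into one kernel-verified Lean document; each statement's English description precedes it below -/
import Mathlib

section
/- Let n11, n22, n12, n21 be natural numbers with n11 > 0 and n22 > 0, and set α1 = n12/n11 and α2 = n21/n22 (as rationals). Define, for each i ∈ {1,2} with j the other index, the events S_{1,i}, S_{2,i}, S_{3,i} as the Boolean combinations given below. Then for each fixed i, exactly one of S_{1,i}, S_{2,i}, S_{3,i} is true. -/
/-- Event S_{1,i} of the LDIC analysis, with parameters given from the
perspective of pair `i`: direct links `nii, njj`, cross links `nij, nji`,
and `αi = nij/nii`, `αj = nji/njj`. -/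
def S1evt (nii njj nij nji : ℕ) : Prop :=
  let ai : ℚ := (nij : ℚ) / nii
  let aj : ℚ := (nji : ℚ) / njj
  ((ai < 1 ∧ aj < 1) ∧ nii > nji) ∨
  ((ai ≤ 1/2 ∧ 1 ≤ aj ∧ aj ≤ 2) ∧ nii > nji) ∨
  ((ai ≤ 1/2 ∧ aj > 2) ∧ nii > nji ∧ nii + njj > nij + nji) ∨
  ((1/2 < ai ∧ ai ≤ 2/3 ∧ 1 ≤ aj) ∧ nii > nji ∧ nii + njj > nij + nji) ∨
  ((2/3 < ai ∧ ai < 1 ∧ 1 ≤ aj) ∧ nii > nji ∧ nii + njj > nij + nji)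

/-- Event S_{2,i}. -/
def S2evt (nii njj nij nji : ℕ) : Prop :=
  let ai : ℚ := (nij : ℚ) / nii
  let aj : ℚ := (nji : ℚ) / njj
  ((ai ≤ 1/2 ∧ aj > 2) ∧ njj < nij ∧ nii + njj ≤ nij + nji) ∨
  ((1/2 < ai ∧ ai ≤ 1 ∧ aj > 1) ∧ njj < nij ∧ nii + njj ≤ nij + nji) ∨
  ((ai > 1 ∧ aj > 1) ∧ njj < nij)

/-- Event S_{3,i}. -/
def S3evt (nii njj nij nji : ℕ) : Prop :=
  let ai : ℚ := (nij : ℚ) / nii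
  let aj : ℚ := (nji : ℚ) / njj
  ((ai < 1 ∧ aj < 1) ∧ nii ≤ nji) ∨
  ((ai ≤ 1/2 ∧ 1 ≤ aj ∧ aj ≤ 2) ∧ nii ≤ nji) ∨
  ((ai ≤ 1/2 ∧ aj > 2) ∧ njj ≥ nij ∧ nii ≤ nji) ∨
  ((1/2 < ai ∧ ai ≤ 2/3 ∧ 1 ≤ aj) ∧ njj ≥ nij ∧ nii ≤ nji) ∨
  ((2/3 < ai ∧ ai < 1 ∧ 1 ≤ aj) ∧ njj ≥ nij ∧ nii ≤ nji) ∨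
  ((1 ≤ ai ∧ 1 ≤ aj) ∧ njj ≥ nij) ∨
  (1 ≤ ai ∧ aj ≤ 1)

def ExactlyOne3 (P Q R : Prop) : Prop :=
  (P ∧ ¬Q ∧ ¬R) ∨ (¬P ∧ Q ∧ ¬R) ∨ (¬P ∧ ¬Q ∧ R)

lemma div_le_div_nat (a b p q : ℕ) (hb : 0 < b) (hq : 0 < q) :
    (a:ℚ)/b ≤ (p:ℚ)/q ↔ q*a ≤ p*b := by
  rw [div_le_div_iff₀ (by exact_mod_cast hb) (by exact_mod_cast hq),
    ← Nat.cast_mul, ← Nat.cast_mul, Nat.cast_le, Nat.mul_comm]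

lemma div_lt_div_nat (a b p q : ℕ) (hb : 0 < b) (hq : 0 < q) :
    (a:ℚ)/b < (p:ℚ)/q ↔ q*a < p*b := by
  rw [div_lt_div_iff₀ (by exact_mod_cast hb) (by exact_mod_cast hq),
    ← Nat.cast_mul, ← Nat.cast_mul, Nat.cast_lt, Nat.mul_comm]

lemma exactlyOne_of (P Q R : Prop) (hPQ : ¬(P∧Q)) (hPR : ¬(P∧R)) (hQR : ¬(Q∧R))
    (hcov : P∨Q∨R) : ExactlyOne3 P Q R := by
  unfold ExactlyOne3; tauto

set_option maxHeartbeats 4000000 in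
lemma key (nii njj nij nji : ℕ) (hi : 0 < nii) (hj : 0 < njj) :
    ExactlyOne3 (S1evt nii njj nij nji) (S2evt nii njj nij nji) (S3evt nii njj nij nji) := by
  have A1 : (nij:ℚ)/nii < 1 ↔ nij < nii := by
    simpa using div_lt_div_nat nij nii 1 1 hi one_pos
  have A2 : (nij:ℚ)/nii ≤ 1/2 ↔ 2*nij ≤ nii := by
    simpa using div_le_div_nat nij nii 1 2 hi two_pos
  have A3 : (1:ℚ)/2 < (nij:ℚ)/nii ↔ nii < nij*2 := by
    simpa using div_lt_div_nat 1 2 nij nii two_pos hi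
  have A4 : (nij:ℚ)/nii ≤ 2/3 ↔ 3*nij ≤ 2*nii := by
    simpa using div_le_div_nat nij nii 2 3 hi three_pos
  have A5 : (2:ℚ)/3 < (nij:ℚ)/nii ↔ nii*2 < nij*3 := by
    simpa using div_lt_div_nat 2 3 nij nii three_pos hi
  have A6 : (1:ℚ) ≤ (nij:ℚ)/nii ↔ nii ≤ nij := by
    simpa using div_le_div_nat 1 1 nij nii one_pos hi
  have A7 : (nij:ℚ)/nii ≤ 1 ↔ nij ≤ nii := by
    simpa using div_le_div_nat nij nii 1 1 hi one_pos
  have A8 : (1:ℚ) < (nij:ℚ)/nii ↔ nii < nij := by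
    simpa using div_lt_div_nat 1 1 nij nii one_pos hi
  have B1 : (nji:ℚ)/njj < 1 ↔ nji < njj := by
    simpa using div_lt_div_nat nji njj 1 1 hj one_pos
  have B6 : (1:ℚ) ≤ (nji:ℚ)/njj ↔ njj ≤ nji := by
    simpa using div_le_div_nat 1 1 nji njj one_pos hj
  have B7 : (nji:ℚ)/njj ≤ 2 ↔ nji ≤ 2*njj := by
    simpa using div_le_div_nat nji njj 2 1 hj one_pos
  have B8 : (2:ℚ) < (nji:ℚ)/njj ↔ njj*2 < nji := by
    simpa using div_lt_div_nat 2 1 nji njj one_pos hj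
  have B9 : (1:ℚ) < (nji:ℚ)/njj ↔ njj < nji := by
    simpa using div_lt_div_nat 1 1 nji njj one_pos hj
  have B10 : (nji:ℚ)/njj ≤ 1 ↔ nji ≤ njj := by
    simpa using div_le_div_nat nji njj 1 1 hj one_pos
  refine exactlyOne_of _ _ _ ?_ ?_ ?_ ?_
  · simp only [S1evt, S2evt, gt_iff_lt, ge_iff_le,
      A1, A2, A3, A4, A5, A6, A7, A8, B1, B6, B7, B8, B9, B10]
    omega
  · simp only [S1evt, S3evt, gt_iff_lt, ge_iff_le,
      A1, A2, A3, A4, A5, A6, A7, A8, B1, B6, B7, B8, B9, B10]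
    omega
  · simp only [S2evt, S3evt, gt_iff_lt, ge_iff_le,
      A1, A2, A3, A4, A5, A6, A7, A8, B1, B6, B7, B8, B9, B10]
    omega
  · simp only [S1evt, S2evt, S3evt, gt_iff_lt, ge_iff_le,
      A1, A2, A3, A4, A5, A6, A7, A8, B1, B6, B7, B8, B9, B10]
    rcases le_or_gt nii nij with hA | hA
    · rcases le_or_gt nji njj with hB | hB
      · right; right; omega
      · rcases le_or_gt nij njj with hC | hC
        · right; right; omega
        · right; left; omega
    · rcases lt_or_ge nji njj with hB | hB
      · rcases lt_or_ge nji nii with hC | hC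
        · left; omega
        · right; right; omega
      · by_cases hP : nji < nii ∧ nij + nji < nii + njj
        · left; omega
        · by_cases hE2 : 2*nij ≤ nii ∧ nji ≤ 2*njj
          · rcases lt_or_ge nji nii with hC | hC
            · left; omega
            · right; right; omega
          · by_cases hQ : njj < nij ∧ nii + njj ≤ nij + nji
            · right; left; omega
            · right; right; omega

theorem S123_exactly_one
    (n11 n22 n12 n21 : ℕ) (h1 : 0 < n11) (h2 : 0 < n22) :
    ExactlyOne3 (S1evt n11 n22 n12 n21) (S2evt n11 n22 n12 n21) (S3evt n11 n22 n12 n21) ∧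
    ExactlyOne3 (S1evt n22 n11 n21 n12) (S2evt n22 n11 n21 n12) (S3evt n22 n11 n21 n12) :=
  ⟨key _ _ _ _ h1 h2, key _ _ _ _ h2 h1⟩
end

section
/- Define D(α,β) = min( max(1,α), max(1, β − (1−α)⁺), (1/2)·(max(1,α) + (1−α)⁺), max((1−α)⁺, α, 1 − (max(1,α) − β)⁺) ) for real α, β ≥ 0, with x⁺ = max(x,0). Then for all α with 2/3 < α ≤ 2 and all β ≥ 0, D(α,β) = D(α,0); equivalently D(α,β) = D(α, max(1,α)). -/
/-- Positive part: `x⁺ = max(x, 0)`. -/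
noncomputable def pPart (x : ℝ) : ℝ := max x 0

/-- Generalized degrees of freedom of the symmetric two-user LDIC-NOF. -/
noncomputable def GDoF (α β : ℝ) : ℝ :=
  min (min (max 1 α) (max 1 (β - pPart (1 - α))))
    (min ((max 1 α + pPart (1 - α)) / 2)
      (max (max (pPart (1 - α)) α) (1 - pPart (max 1 α - β))))

lemma gdof_key (α β : ℝ) (hα1 : 2/3 < α) (hα2 : α ≤ 2) :
    GDoF α β = if α ≤ 1 then (2 - α) / 2 else α / 2 := by
  unfold GDoF pPart
  rcases le_or_gt α 1 with h | h
  · rw [if_pos h, max_eq_left h, max_eq_left (by linarith : (0:ℝ) ≤ 1 - α),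
      min_eq_left (le_max_left 1 _),
      max_eq_right (by linarith : 1 - α ≤ α),
      min_eq_left (le_trans (by linarith) (le_max_left α _)),
      min_eq_right (by linarith)]
    ring
  · rw [if_neg (not_le.mpr h), max_eq_right h.le,
      max_eq_right (by linarith : 1 - α ≤ 0),
      max_eq_right (by linarith : (0:ℝ) ≤ α), add_zero, sub_zero]
    have h1 : 1 - max (α - β) 0 ≤ α := by
      have := le_max_right (α - β) 0; linarith
    rw [max_eq_left h1,
      min_eq_left (by linarith : α / 2 ≤ α),
      min_eq_right (le_min (by linarith) (le_trans (by linarith) (le_max_left 1 β)))]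

theorem gdof_moderate_strong_interference_feedback_useless
    (α β : ℝ) (hα1 : 2/3 < α) (hα2 : α ≤ 2) (hβ : 0 ≤ β) :
    GDoF α β = GDoF α 0 ∧ GDoF α β = GDoF α (max 1 α) := by
  constructor <;> rw [gdof_key α _ hα1 hα2, gdof_key α _ hα1 hα2]
end
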